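/- There exist fixed 0/1-valued matrices R_Q^l, R_K^l ∈ {0,1}^{m×d}, R_V^l ∈ {0,1}^{m×m} for l ∈ [L] and U ∈ {0,1}^{m×d_in}, with m = (L+1)·max{2d, d_in}, such that for every choice of target parameters {W_Q^l, W_K^l ∈ R^{d_in×d}, W_V^l ∈ R^{d_in×d}, W_O^l ∈ R^{d×d_in}}, there exists E ∈ R^{d_in×m} satisfying, for all l ∈ [L], E R_V^1 ··· R_V^{l-1} R_Q^l = (W_V^1 W_O^1 ··· W_V^{l-1} W_O^{l-1}) W_Q^l, E R_V^1 ··· R_V^{l-1} R_K^l = (W_V^1 W_O^1 ··· W_V^{l-1} W_O^{l-1}) W_K^l, and E R_V^1 ··· R_V^L U = W_V^1 W_O^1 ··· W_V^L W_O^L. -/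
import Mathlib


open Matrix

/-- `wProd … l = (W_V^1 W_O^1) ⋯ (W_V^l W_O^l)` (empty product = identity). -/
noncomputable def wProd {din d : ℕ}
    (WV : ℕ → Matrix (Fin din) (Fin d) ℝ)
    (WO : ℕ → Matrix (Fin d) (Fin din) ℝ) : ℕ → Matrix (Fin din) (Fin din) ℝ
  | 0 => 1
  | l + 1 => wProd WV WO l * (WV l * WO l)

/-- `rProd … l = R_V^1 ⋯ R_V^l` (empty product = identity). -/
noncomputable def rProd {m : ℕ}
    (RV : ℕ → Matrix (Fin m) (Fin m) ℝ) : ℕ → Matrix (Fin m) (Fin m) ℝ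
  | 0 => 1
  | l + 1 => rProd RV l * RV l

/-- Selector matrix: its columns are the standard basis vectors `e_o, …, e_{o+k-1}`. -/
def sel (m k o : ℕ) : Matrix (Fin m) (Fin k) ℝ :=
  Matrix.of fun i j => if (i : ℕ) = o + j then 1 else 0

lemma sel_zero_or_one (m k o : ℕ) (i j) : sel m k o i j = 0 ∨ sel m k o i j = 1 := by
  unfold sel; simp only [of_apply]; split <;> simp

lemma selT_mul_sel (m k k' o o' : ℕ) (ho : o + k ≤ m) :
    (sel m k o)ᵀ * sel m k' o' =
      Matrix.of fun (j : Fin k) (j' : Fin k') => if o + (j : ℕ) = o' + j' then (1 : ℝ) else 0 := by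
  ext j j'
  have hoj : o + (j : ℕ) < m := lt_of_lt_of_le (Nat.add_lt_add_left j.2 o) ho
  simp only [Matrix.mul_apply, transpose_apply, sel, of_apply]
  rw [Finset.sum_eq_single (⟨o + j, hoj⟩ : Fin m)]
  · simp
  · intro b _ hb
    have : (b : ℕ) ≠ o + j := fun h => hb (Fin.ext h)
    simp [this]
  · intro h; exact absurd (Finset.mem_univ _) h

lemma mul_selT_sel_self {n : ℕ} (m k o : ℕ) (ho : o + k ≤ m)
    (A : Matrix (Fin n) (Fin k) ℝ) :
    A * (sel m k o)ᵀ * sel m k o = A := by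
  rw [Matrix.mul_assoc, selT_mul_sel m k k o o ho]
  have h1 : (Matrix.of fun (j : Fin k) (j' : Fin k) =>
      if o + (j : ℕ) = o + j' then (1 : ℝ) else 0) = 1 := by
    ext j j'
    simp [one_apply, Fin.ext_iff]
  rw [h1, Matrix.mul_one]

lemma mul_selT_sel_disj {n : ℕ} (m k k' o o' : ℕ) (ho : o + k ≤ m)
    (hd : o + k ≤ o' ∨ o' + k' ≤ o)
    (A : Matrix (Fin n) (Fin k) ℝ) :
    A * (sel m k o)ᵀ * sel m k' o' = 0 := by
  rw [Matrix.mul_assoc, selT_mul_sel m k k' o o' ho]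
  have h1 : (Matrix.of fun (j : Fin k) (j' : Fin k') =>
      if o + (j : ℕ) = o' + j' then (1 : ℝ) else 0) = 0 := by
    ext j j'
    have hj := j.2
    have hj' := j'.2
    have : o + (j : ℕ) ≠ o' + (j' : ℕ) := by omega
    simp [this]
  rw [h1, Matrix.mul_zero]

lemma rProd_one {m : ℕ} (l : ℕ) : rProd (fun _ => (1 : Matrix (Fin m) (Fin m) ℝ)) l = 1 := by
  induction l with
  | zero => rfl
  | succ n ih => rw [rProd, ih, mul_one]

/-- sparse single-head universal transformer: with
`m = (L+1)·max{2d, d_in}` there exist fixed 0/1-valued parameter matrices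
`R_Q^l, R_K^l, R_V^l, U` such that for every target transformer there exists an
embedding `E` matching all query/key products and the full value path. -/
theorem stmt4 (L d din m : ℕ) (hm : m = (L + 1) * max (2 * d) din) :
    ∃ (RQ RK : ℕ → Matrix (Fin m) (Fin d) ℝ)
      (RV : ℕ → Matrix (Fin m) (Fin m) ℝ)
      (U : Matrix (Fin m) (Fin din) ℝ),
      (∀ l < L, ∀ i j, RQ l i j = 0 ∨ RQ l i j = 1) ∧
      (∀ l < L, ∀ i j, RK l i j = 0 ∨ RK l i j = 1) ∧
      (∀ l < L, ∀ i j, RV l i j = 0 ∨ RV l i j = 1) ∧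
      (∀ i j, U i j = 0 ∨ U i j = 1) ∧
      ∀ (WQ WK WV : ℕ → Matrix (Fin din) (Fin d) ℝ)
        (WO : ℕ → Matrix (Fin d) (Fin din) ℝ),
        ∃ E : Matrix (Fin din) (Fin m) ℝ,
          (∀ l < L,
            E * rProd RV l * RQ l = wProd WV WO l * WQ l ∧
            E * rProd RV l * RK l = wProd WV WO l * WK l) ∧
          E * rProd RV L * U = wProd WV WO L := by
  set B := max (2 * d) din with hB
  have h2d : 2 * d ≤ B := le_max_left _ _
  have hdin : din ≤ B := le_max_right _ _
  have hm' : m = L * B + B := by rw [hm, add_mul, one_mul]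
  -- key arithmetic facts about blocks
  have hmul : ∀ x y : ℕ, x < y → x * B + B ≤ y * B := by
    intro x y h
    calc x * B + B = (x + 1) * B := by ring
      _ ≤ y * B := Nat.mul_le_mul_right B h
  have hmono : ∀ x y : ℕ, x ≤ y → x * B ≤ y * B := fun x y h => Nat.mul_le_mul_right B h
  have hblock : ∀ l, l < L → l * B + 2 * d ≤ L * B := by
    intro l hl
    have := hmul l L hl
    omega
  refine ⟨fun l => sel m d (l * B), fun l => sel m d (l * B + d), fun _ => 1,
    sel m din (L * B), ?_, ?_, ?_, ?_, ?_⟩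
  · intro l _ i j; exact sel_zero_or_one _ _ _ _ _
  · intro l _ i j; exact sel_zero_or_one _ _ _ _ _
  · intro l _ i j
    rcases eq_or_ne i j with h | h
    · right; simp [h, Matrix.one_apply]
    · left; simp [Matrix.one_apply, h]
  · intro i j; exact sel_zero_or_one _ _ _ _ _
  intro WQ WK WV WO
  refine ⟨(∑ l ∈ Finset.range L,
      (wProd WV WO l * WQ l * (sel m d (l * B))ᵀ +
       wProd WV WO l * WK l * (sel m d (l * B + d))ᵀ)) +
      wProd WV WO L * (sel m din (L * B))ᵀ, ?_, ?_⟩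
  · intro l' hl'
    have hb' := hblock l' hl'
    constructor
    · -- query equation at layer l'
      simp only [rProd_one, Matrix.mul_one]
      rw [Matrix.add_mul, Matrix.sum_mul,
        mul_selT_sel_disj m din d (L * B) (l' * B) (by omega) (Or.inr (by omega)),
        add_zero,
        Finset.sum_eq_single_of_mem l' (Finset.mem_range.2 hl')]
      · rw [Matrix.add_mul, mul_selT_sel_self m d (l' * B) (by omega),
          mul_selT_sel_disj m d d (l' * B + d) (l' * B) (by omega) (Or.inr (by omega)),
          add_zero]
      · intro b hb hne
        have hbb := hblock b (Finset.mem_range.1 hb)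
        rcases Nat.lt_or_ge b l' with h | h
        · have := hmul b l' h
          rw [Matrix.add_mul,
            mul_selT_sel_disj m d d (b * B) (l' * B) (by omega) (Or.inl (by omega)),
            mul_selT_sel_disj m d d (b * B + d) (l' * B) (by omega) (Or.inl (by omega)),
            add_zero]
        · have hlt : l' < b := lt_of_le_of_ne h (Ne.symm hne)
          have := hmul l' b hlt
          have hmb := hmono l' b (le_of_lt hlt)
          rw [Matrix.add_mul,
            mul_selT_sel_disj m d d (b * B) (l' * B) (by omega) (Or.inr (by omega)),
            mul_selT_sel_disj m d d (b * B + d) (l' * B) (by omega) (Or.inr (by omega)),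
            add_zero]
    · -- key equation at layer l'
      simp only [rProd_one, Matrix.mul_one]
      rw [Matrix.add_mul, Matrix.sum_mul,
        mul_selT_sel_disj m din d (L * B) (l' * B + d) (by omega) (Or.inr (by omega)),
        add_zero,
        Finset.sum_eq_single_of_mem l' (Finset.mem_range.2 hl')]
      · rw [Matrix.add_mul, mul_selT_sel_self m d (l' * B + d) (by omega),
          mul_selT_sel_disj m d d (l' * B) (l' * B + d) (by omega) (Or.inl (by omega)),
          zero_add]
      · intro b hb hne
        have hbb := hblock b (Finset.mem_range.1 hb)
        rcases Nat.lt_or_ge b l' with h | h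
        · have := hmul b l' h
          have hmb := hmono b l' (le_of_lt h)
          rw [Matrix.add_mul,
            mul_selT_sel_disj m d d (b * B) (l' * B + d) (by omega) (Or.inl (by omega)),
            mul_selT_sel_disj m d d (b * B + d) (l' * B + d) (by omega) (Or.inl (by omega)),
            add_zero]
        · have hlt : l' < b := lt_of_le_of_ne h (Ne.symm hne)
          have := hmul l' b hlt
          rw [Matrix.add_mul,
            mul_selT_sel_disj m d d (b * B) (l' * B + d) (by omega) (Or.inr (by omega)),
            mul_selT_sel_disj m d d (b * B + d) (l' * B + d) (by omega) (Or.inr (by omega)),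
            add_zero]
  · -- value path
    simp only [rProd_one, Matrix.mul_one]
    rw [Matrix.add_mul, Matrix.sum_mul,
      mul_selT_sel_self m din (L * B) (by omega)]
    have hz : ∀ b ∈ Finset.range L,
        (wProd WV WO b * WQ b * (sel m d (b * B))ᵀ +
         wProd WV WO b * WK b * (sel m d (b * B + d))ᵀ) * sel m din (L * B) = 0 := by
      intro b hb
      have hbb := hblock b (Finset.mem_range.1 hb)
      rw [Matrix.add_mul,
        mul_selT_sel_disj m d din (b * B) (L * B) (by omega) (Or.inl (by omega)),
        mul_selT_sel_disj m d din (b * B + d) (L * B) (by omega) (Or.inl (by omega)),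
        add_zero]
    rw [Finset.sum_eq_zero hz, zero_add]
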